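/- arXiv:1101.0422 — 4 statements merged into one kernel-verified Lean document; each statement's English description precedes it below -/
import Mathlib

section
/- If π is a permutation of ±I (where I is a finite set of positive integers) satisfying δπδ = π⁻¹ (with δ : k ↦ -k) and π(k) ≠ -k for all k, then no cycle of π contains both k and -k for any k. -/
/-- `π` is a premap: conjugation by `k ↦ -k` gives `π⁻¹`, and no orbit of `π`
contains both `k` and `-k` (for `k ≠ 0`). -/
def IsPremap (π : Equiv.Perm ℤ) : Prop :=
  (Equiv.neg ℤ) * π * (Equiv.neg ℤ) = π⁻¹ ∧
    ∀ k : ℤ, k ≠ 0 → ∀ m : ℤ, (π ^ m) k ≠ -k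

/-- if `π` is a permutation of `±I` (`I` a finite set of positive
integers) with `δπδ = π⁻¹` and `π k ≠ -k` for all `k ∈ ±I`, then no cycle of `π`
contains both `k` and `-k`. -/
theorem statement0 (I : Finset ℤ) (hI : ∀ k ∈ I, 0 < k) (π : Equiv.Perm ℤ)
    (hsupp : ∀ k : ℤ, k ∉ I → -k ∉ I → π k = k)
    (hconj : (Equiv.neg ℤ) * π * (Equiv.neg ℤ) = π⁻¹)
    (hfix : ∀ k : ℤ, (k ∈ I ∨ -k ∈ I) → π k ≠ -k) :
    ∀ k : ℤ, k ≠ 0 → ∀ m : ℤ, (π ^ m) k ≠ -k := by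
  set σ := Equiv.neg ℤ with hσdef
  have hσsq : σ * σ = 1 := by
    ext x; simp [hσdef]
  have hσinv : σ⁻¹ = σ := inv_eq_of_mul_eq_one_left hσsq
  have hconj' : σ * π * σ⁻¹ = π⁻¹ := by rw [hσinv]; exact hconj
  have key : ∀ m : ℤ, σ * π ^ m * σ⁻¹ = π ^ (-m) := by
    intro m
    rw [← conj_zpow, hconj', inv_zpow, zpow_neg]
  have key2 : ∀ (m : ℤ) (x : ℤ), (π ^ m) (-x) = -((π ^ (-m)) x) := by
    intro m x
    have := congrArg (fun f => f (-x)) (key (-m))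
    simp only [neg_neg] at this
    have h2 : σ ((π ^ (-m)) (σ⁻¹ (-x))) = (π ^ m) (-x) := this
    rw [hσinv] at h2
    have : σ (-x) = x := by simp [hσdef]
    rw [this] at h2
    have h3 : σ ((π ^ (-m)) x) = -((π ^ (-m)) x) := by simp [hσdef]
    rw [h3] at h2
    omega
  have hzero : π 0 = 0 := by
    apply hsupp
    · intro h; exact absurd (hI 0 h) (lt_irrefl 0)
    · intro h; exact absurd (hI (-0) h) (by norm_num)
  have hzerom : ∀ m : ℤ, (π ^ m) 0 = 0 := by
    intro m
    exact Equiv.Perm.zpow_apply_eq_self_of_apply_eq_self hzero m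
  intro k hk m hm
  -- compose: apply π^{-t} style
  rcases Int.even_or_odd m with ⟨t, ht⟩ | ⟨t, ht⟩
  · -- m = 2t
    have h1 : (π ^ t) k = (π ^ (-t)) (-k) := by
      have h := congrArg (π ^ (-t)) hm
      rw [← Equiv.Perm.mul_apply, ← zpow_add] at h
      have he : -t + m = t := by omega
      rw [he] at h
      exact h
    rw [key2] at h1
    simp only [neg_neg] at h1
    have h0 : (π ^ t) k = 0 := by omega
    have : (π ^ t) k = (π ^ t) 0 := by rw [h0, hzerom]
    exact hk ((π ^ t).injective this)
  · -- m = 2t+1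
    set x := (π ^ t) k with hx
    have h1 : π x = (π ^ (-t)) (-k) := by
      have h := congrArg (π ^ (-t)) hm
      rw [← Equiv.Perm.mul_apply, ← zpow_add] at h
      have he : -t + m = 1 + t := by omega
      rw [he, zpow_add, Equiv.Perm.mul_apply, zpow_one] at h
      exact h
    rw [key2, neg_neg, ← hx] at h1
    by_cases hmem : x ∈ I ∨ -x ∈ I
    · exact hfix x hmem h1
    · push_neg at hmem
      have hfixx : π x = x := hsupp x hmem.1 hmem.2
      have hx0 : x = 0 := by omega
      have : (π ^ t) k = (π ^ t) 0 := by rw [← hx, hx0, hzerom]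
      exact hk ((π ^ t).injective this)
end

section
/- For any two permutations π, ρ of a finite set I, #(π) + #(πρ) + #(ρ) ≤ |I| + 2·#⟨π,ρ⟩, where #⟨π,ρ⟩ is the number of orbits of the subgroup generated by π and ρ. -/
/-!
Multiplying a permutation on the left by a transposition `(a b)` changes its number of cycles by
at most one, and lowers it by exactly one when `a` and `b` lie in different cycles (the two cycles
merge). Adding `(a b)` to a set of generators lowers the number of orbits by at most one, and not
at all when `a` and `b` already share an orbit. Walking along a list of transpositions, these two
facts give `|I| + #(t₁ ⋯ tₙ) ≤ n + 2·#⟨t₁, …, tₙ⟩`. Apply this to the concatenation of minimal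
factorisations of `π` and `ρ` into `|I| - #(π)` and `|I| - #(ρ)` transpositions; the group they
generate contains `π` and `ρ`, so it has at most `#⟨π, ρ⟩` orbits.
-/

open Equiv Equiv.Perm MulAction Pointwise Subgroup

namespace Setoid

variable {α : Type*} {r s : Setoid α}

theorem card_quotient_eq_card (h : ∀ x y, r x y → x = y) : Nat.card (Quotient r) = Nat.card α :=
  Nat.card_congr (Equiv.ofBijective (Quotient.mk r)
    ⟨fun _ _ hxy => h _ _ (Quotient.exact hxy), Quotient.mk_surjective⟩).symm

variable [Finite α]

theorem card_quotient_le_of_le (h : r ≤ s) : Nat.card (Quotient s) ≤ Nat.card (Quotient r) :=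
  Nat.card_le_card_of_surjective (map_of_le h) (Quotient.ind fun x => ⟨Quotient.mk r x, rfl⟩)

theorem card_quotient_le_add_one (a b : α) (h : ∀ x, ¬r x a → ¬r x b → ∀ y, r x y ↔ s x y) :
    Nat.card (Quotient r) ≤ Nat.card (Quotient s) + 1 := by
  classical
  let f : α → Option (Quotient s) := fun x =>
    if r x a then none else some (Quotient.mk s (if r x b then b else x))
  have hf : ∀ x y, f x = f y ↔ r x y := by
    intro x y
    by_cases hxa : r x a <;> by_cases hya : r y a <;> by_cases hxb : r x b <;>
      by_cases hyb : r y b <;>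
      simp only [f, hxa, hya, hxb, hyb, if_true, if_false, Quotient.eq, reduceCtorEq,
        Option.some.injEq] <;>
      grind [Setoid.symm', Setoid.trans']
  have hinj : Function.Injective (Quotient.lift f fun x y hxy => (hf x y).2 hxy) :=
    Quotient.ind₂ fun x y hxy => Quotient.sound ((hf x y).1 hxy)
  simpa using Nat.card_le_card_of_injective _ hinj

theorem card_quotient_add_one_le {a b : α} (h : ∀ x, ¬s x a → ¬s x b → ∀ y, r x y ↔ s x y)
    (hs : s a b) (hr : ¬r a b) : Nat.card (Quotient s) + 1 ≤ Nat.card (Quotient r) := by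
  classical
  let g : α → Quotient r := fun x => Quotient.mk r (if s x a then a else x)
  have hg : ∀ x y, g x = g y ↔ s x y := by
    intro x y
    by_cases hxa : s x a <;> by_cases hya : s y a <;>
      simp only [g, hxa, hya, if_true, if_false, Quotient.eq] <;>
      grind [Setoid.symm', Setoid.trans']
  have hgb : ∀ x, g x ≠ Quotient.mk r b := by
    intro x
    by_cases hxa : s x a <;>
      simp only [g, hxa, if_true, if_false, ne_eq, Quotient.eq] <;>
      grind [Setoid.symm', Setoid.trans']
  let g' : Option (Quotient s) → Quotient r :=
    fun o => o.elim (Quotient.mk r b) (Quotient.lift g fun x y hxy => (hg x y).2 hxy)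
  have hinj : Function.Injective g' := by
    rintro (_ | ⟨⟨x⟩⟩) (_ | ⟨⟨y⟩⟩) hxy
    · rfl
    · exact absurd hxy.symm (hgb y)
    · exact absurd hxy (hgb x)
    · exact congrArg some (Quotient.sound ((hg x y).1 hxy))
  simpa using Nat.card_le_card_of_injective _ hinj

end Setoid

namespace MulAction

variable {G α : Type*} [Group G] [MulAction G α]

theorem orbitRel_mono {H K : Subgroup G} (h : H ≤ K) : orbitRel H α ≤ orbitRel K α :=
  fun _ _ ⟨g, hg⟩ => ⟨⟨g, h g.2⟩, hg⟩

theorem orbit_closure_insert_subset {S : Set G} {t : G} {x : α}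
    (ht : t • orbit (closure S) x = orbit (closure S) x) :
    orbit (closure (insert t S)) x ⊆ orbit (closure S) x := by
  have hle : closure (insert t S) ≤ stabilizer G (orbit (closure S) x) :=
    (closure_le _).2 (Set.insert_subset ht fun s hs =>
      smul_orbit (⟨s, subset_closure hs⟩ : closure S) x)
  rintro _ ⟨g, rfl⟩
  rw [← mem_stabilizer_iff.1 (hle g.2)]
  exact Set.smul_mem_smul_set (mem_orbit_self x)

theorem card_orbitRel_quotient_bot :
    Nat.card (orbitRel.Quotient (⊥ : Subgroup G) α) = Nat.card α :=
  Setoid.card_quotient_eq_card fun _ _ ⟨g, hg⟩ => by simp [← hg, Subsingleton.elim g 1]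

end MulAction

namespace Equiv.Perm

variable {α : Type*} {σ τ : Perm α} {a b x y : α}

theorem pow_apply_eq_pow_apply_of_forall_lt {n : ℕ}
    (h : ∀ k < n, τ ((σ ^ k) x) = σ ((σ ^ k) x)) : (τ ^ n) x = (σ ^ n) x := by
  induction n with
  | zero => rfl
  | succ n ih =>
    rw [pow_succ', mul_apply, ih fun k hk => h k (Nat.lt_succ_of_lt hk), h n n.lt_succ_self, ← mul_apply,
      ← pow_succ']

theorem SameCycle.mem_orbit {H : Subgroup (Perm α)} (hσ : σ ∈ H) (h : σ.SameCycle x y) :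
    y ∈ orbit H x :=
  let ⟨n, hn⟩ := h
  ⟨⟨σ ^ n, zpow_mem hσ n⟩, hn⟩

theorem card_quot_sameCycle_one : Nat.card (Quot (1 : Perm α).SameCycle) = Nat.card α :=
  Setoid.card_quotient_eq_card (r := SameCycle.setoid 1) fun _ _ => sameCycle_one.1

section DecidableEq

variable [DecidableEq α]

theorem orbitRel_closure_insert_swap_eq {S : Set (Perm α)} (h : a ∈ orbit (closure S) b) :
    orbitRel (closure (insert (swap a b) S)) α = orbitRel (closure S) α := by
  refine le_antisymm (fun x y hxy => ?_) (orbitRel_mono (closure_mono (Set.subset_insert _ _)))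
  have hy : swap a b • orbit (closure S) y = orbit (closure S) y := by
    refine mem_stabilizer_iff.1 (Equiv.swap_mem_stabilizer.2 ?_)
    rw [← orbit_eq_iff, orbit_eq_iff.2 h, orbit_eq_iff]
  exact orbit_closure_insert_subset hy hxy

section Finite

variable [Finite α]

theorem sameCycle_swap_mul_iff_of_not_sameCycle (ha : ¬σ.SameCycle x a)
    (hb : ¬σ.SameCycle x b) : (swap a b * σ).SameCycle x y ↔ σ.SameCycle x y := by
  have hpow (n : ℕ) : ((swap a b * σ) ^ n) x = (σ ^ n) x :=
    pow_apply_eq_pow_apply_of_forall_lt fun k _ => by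
      have hk : σ.SameCycle x (σ ((σ ^ k) x)) :=
        sameCycle_apply_right.2 (sameCycle_pow_right.2 (SameCycle.refl σ x))
      rw [mul_apply, swap_apply_of_ne_of_ne (fun e : _ = a => ha (e ▸ hk))
        fun e : _ = b => hb (e ▸ hk)]
  constructor
  · intro h
    obtain ⟨n, rfl⟩ := h.exists_nat_pow_eq
    exact ⟨n, by rw [zpow_natCast, hpow]⟩
  · intro h
    obtain ⟨n, rfl⟩ := h.exists_nat_pow_eq
    exact ⟨n, by rw [zpow_natCast, hpow]⟩

theorem sameCycle_swap_mul_of_not_sameCycle (h : ¬σ.SameCycle a b) :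
    (swap a b * σ).SameCycle a b := by
  have hex : ∃ m : ℕ, (σ ^ (m + 1)) a = a := by
    obtain ⟨n, hn⟩ := (sameCycle_apply_left.2 (SameCycle.refl σ a)).exists_nat_pow_eq
    exact ⟨n, by rwa [pow_succ, mul_apply]⟩
  -- Up to the last point `σ⁻¹ a` of its `σ`-cycle, the orbit of `a` under `swap a b * σ` follows
  -- `σ`; the next step goes to `b`.
  have hm : ((swap a b * σ) ^ Nat.find hex) a = (σ ^ Nat.find hex) a :=
    pow_apply_eq_pow_apply_of_forall_lt fun k hk => by
      rw [mul_apply, ← mul_apply σ, ← pow_succ', swap_apply_of_ne_of_ne (Nat.find_min hex hk)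
        fun e => h ⟨(k + 1 : ℕ), by rw [zpow_natCast, e]⟩]
  refine ⟨(Nat.find hex + 1 : ℕ), ?_⟩
  rw [zpow_natCast, pow_succ', mul_apply, hm, mul_apply, ← mul_apply σ, ← pow_succ',
    Nat.find_spec hex, swap_apply_left]

theorem card_quot_sameCycle_swap_mul_le (σ : Perm α) (a b : α) :
    Nat.card (Quot (swap a b * σ).SameCycle) ≤ Nat.card (Quot σ.SameCycle) + 1 :=
  Setoid.card_quotient_le_add_one (r := SameCycle.setoid (swap a b * σ))
    (s := SameCycle.setoid σ) a b fun _ ha hb y => by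
      have h := sameCycle_swap_mul_iff_of_not_sameCycle (y := y) ha hb
      rw [swap_mul_self_mul] at h
      exact h.symm

theorem card_quot_sameCycle_swap_mul_add_one_le (h : ¬σ.SameCycle a b) :
    Nat.card (Quot (swap a b * σ).SameCycle) + 1 ≤ Nat.card (Quot σ.SameCycle) :=
  Setoid.card_quotient_add_one_le (r := SameCycle.setoid σ)
    (s := SameCycle.setoid (swap a b * σ)) (fun _ ha hb y => by
      have h := sameCycle_swap_mul_iff_of_not_sameCycle (y := y) ha hb
      rwa [swap_mul_self_mul] at h)
    (sameCycle_swap_mul_of_not_sameCycle h) h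

theorem card_orbitRel_quotient_closure_le_insert_swap_add_one (S : Set (Perm α)) (a b : α) :
    Nat.card (orbitRel.Quotient (closure S) α) ≤
      Nat.card (orbitRel.Quotient (closure (insert (swap a b) S)) α) + 1 :=
  Setoid.card_quotient_le_add_one a b fun x ha hb y => by
    refine ⟨fun h => orbitRel_mono (closure_mono (Set.subset_insert _ _)) h, fun h => ?_⟩
    have hx : swap a b • orbit (closure S) x = orbit (closure S) x :=
      mem_stabilizer_iff.1 (Equiv.swap_mem_stabilizer.2
        (iff_of_false (mt mem_orbit_symm.1 ha) (mt mem_orbit_symm.1 hb)))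
    exact mem_orbit_symm.1 (orbit_closure_insert_subset hx (mem_orbit_symm.1 h))

theorem card_add_card_quot_sameCycle_list_prod_le (L : List (Perm α)) (hL : ∀ t ∈ L, t.IsSwap) :
    Nat.card α + Nat.card (Quot L.prod.SameCycle) ≤
      L.length + 2 * Nat.card (orbitRel.Quotient (closure {t | t ∈ L}) α) := by
  induction L with
  | nil =>
    have hempty : {t : Perm α | t ∈ []} = ∅ :=
      Set.eq_empty_of_forall_notMem fun _ => List.not_mem_nil
    rw [List.prod_nil, card_quot_sameCycle_one, List.length_nil, hempty, Subgroup.closure_empty,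
      card_orbitRel_quotient_bot]
    omega
  | cons t L ih =>
    obtain ⟨a, b, -, rfl⟩ := hL t List.mem_cons_self
    have ih := ih fun t ht => hL t (List.mem_cons_of_mem _ ht)
    have hset : {t | t ∈ swap a b :: L} = insert (swap a b) {t | t ∈ L} :=
      Set.ext fun _ => List.mem_cons
    rw [List.prod_cons, List.length_cons, hset]
    by_cases hab : a ∈ orbit (closure {t | t ∈ L}) b
    · have := card_quot_sameCycle_swap_mul_le L.prod a b
      have : Nat.card (orbitRel.Quotient (closure (insert (swap a b) {t | t ∈ L})) α) =
          Nat.card (orbitRel.Quotient (closure {t | t ∈ L}) α) :=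
        congrArg (fun r => Nat.card (Quotient r)) (orbitRel_closure_insert_swap_eq hab)
      omega
    · have hσ : ¬L.prod.SameCycle a b := fun h =>
        hab (mem_orbit_symm.1 (h.mem_orbit (list_prod_mem fun _ ht => subset_closure ht)))
      have := card_quot_sameCycle_swap_mul_add_one_le hσ
      have := card_orbitRel_quotient_closure_le_insert_swap_add_one {t | t ∈ L} a b
      omega

end Finite

end DecidableEq

section Fintype

variable [Fintype α] [DecidableEq α]

theorem exists_isSwap_list_prod_eq (σ : Perm α) :
    ∃ L : List (Perm α), (∀ t ∈ L, t.IsSwap) ∧ L.prod = σ ∧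
      L.length + Nat.card (Quot σ.SameCycle) ≤ Nat.card α := by
  induction h : σ.support.card using Nat.strong_induction_on generalizing σ with
  | _ n ih =>
    obtain rfl | hσ := eq_or_ne σ 1
    · exact ⟨[], by simp, rfl, by simp [card_quot_sameCycle_one]⟩
    obtain ⟨x, hx⟩ : ∃ x, σ x ≠ x := not_forall.1 fun h => hσ (Equiv.ext h)
    obtain ⟨L, hL, hprod, hlen⟩ :=
      ih _ (h ▸ card_support_swap_mul hx) (swap x (σ x) * σ) rfl
    have hfix : (swap x (σ x) * σ) x = x := by simp
    have hsplit := card_quot_sameCycle_swap_mul_add_one_le (a := x) (b := σ x)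
      fun hc : (swap x (σ x) * σ).SameCycle x (σ x) => hx (hc.eq_of_left hfix).symm
    rw [swap_mul_self_mul] at hsplit
    refine ⟨swap x (σ x) :: L, ?_, by rw [List.prod_cons, hprod, swap_mul_self_mul], ?_⟩
    · exact List.forall_mem_cons.2 ⟨⟨x, σ x, hx.symm, rfl⟩, hL⟩
    · rw [List.length_cons]
      omega

end Fintype

end Equiv.Perm

/-- for permutations `π, ρ` of a finite set,
`#(π) + #(πρ) + #(ρ) ≤ |I| + 2·#⟨π,ρ⟩`. -/
theorem statement5 {α : Type*} [Fintype α] (π ρ : Equiv.Perm α) :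
    Nat.card (Quot π.SameCycle) + Nat.card (Quot (π * ρ).SameCycle) +
        Nat.card (Quot ρ.SameCycle) ≤
      Fintype.card α +
        2 * Nat.card (MulAction.orbitRel.Quotient (Subgroup.closure {π, ρ}) α) := by
  classical
  obtain ⟨Lπ, hLπ, hπ, hcardπ⟩ := exists_isSwap_list_prod_eq π
  obtain ⟨Lρ, hLρ, hρ, hcardρ⟩ := exists_isSwap_list_prod_eq ρ
  have hcard := card_add_card_quot_sameCycle_list_prod_le (Lπ ++ Lρ)
    (List.forall_mem_append.2 ⟨hLπ, hLρ⟩)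
  rw [List.prod_append, hπ, hρ, List.length_append] at hcard
  have hgen : closure {π, ρ} ≤ closure {t | t ∈ Lπ ++ Lρ} := by
    refine (closure_le _).2 (Set.insert_subset ?_ (Set.singleton_subset_iff.2 ?_))
    · exact hπ ▸ list_prod_mem fun _ ht => subset_closure (List.mem_append_left _ ht)
    · exact hρ ▸ list_prod_mem fun _ ht => subset_closure (List.mem_append_right _ ht)
  have horbits : Nat.card (orbitRel.Quotient (closure {t | t ∈ Lπ ++ Lρ}) α) ≤
      Nat.card (orbitRel.Quotient (closure {π, ρ}) α) :=
    Setoid.card_quotient_le_of_le (orbitRel_mono hgen)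
  rw [← Nat.card_eq_fintype_card]
  omega
end

section
/- Let γ be an n-cycle on a finite set I and let π be a premap on ±I. Then χ(γ,π) = 2 if and only if π does not connect I and −I (no orbit of π meets both I and −I) and the permutation induced by π on I is disc-noncrossing relative to γ. -/
/-- `γ₋ = δ γ δ`, where `δ : k ↦ -k`. -/
def permMinus (γ : Equiv.Perm ℤ) : Equiv.Perm ℤ :=
  (Equiv.neg ℤ) * γ * (Equiv.neg ℤ)

/-- The number of orbits of `σ` meeting the set `S`. -/
noncomputable def orbitCountOn (σ : Equiv.Perm ℤ) (S : Set ℤ) : ℕ :=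
  Nat.card (Quot (fun a b : S => σ.SameCycle a b))

/-- The set `±I = I ∪ (-I)`. -/
def pmSet (I : Finset ℤ) : Set ℤ := {k : ℤ | k ∈ I ∨ -k ∈ I}

/-- The Euler characteristic
`χ(γ,π) = #(γ₊γ₋⁻¹)/2 + #(π)/2 + #(γ₊⁻¹π⁻¹γ₋)/2 − |I|`,
all orbits counted on `±I`. -/
noncomputable def chi (I : Finset ℤ) (γ π : Equiv.Perm ℤ) : ℚ :=
  (orbitCountOn (γ * (permMinus γ)⁻¹) (pmSet I) : ℚ) / 2 +
    (orbitCountOn π (pmSet I) : ℚ) / 2 +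
    (orbitCountOn (γ⁻¹ * π⁻¹ * permMinus γ) (pmSet I) : ℚ) / 2 - I.card


/-!
Write `S = I ∪ -I` and `δ k = -k`. Since `γ₋ = δγδ` is supported on `-I`, the permutation
`γ₊γ₋⁻¹` has exactly the two cycles `I` and `-I`, so `χ = 1 + (#π + #τ)/2 - |I|` with
`τ = γ₊⁻¹π⁻¹γ₋`, which is conjugate by `γ` to `η⁻¹` for `η = γ₊γ₋⁻¹π`.

If `π` connects `I` and `-I`, then `⟨π, η⟩ ∋ ηπ⁻¹ = γ₊γ₋⁻¹` acts transitively on `S`. For two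
permutations generating a transitive group on an `N`-element set, `#π + #η ≤ N + 1`: their cycles
are the vertices of a connected bipartite graph with one edge per point. Hence `χ < 2`.

Otherwise `π` preserves `I` and `-I`. On `I`, `τ` acts as `γ⁻¹π⁻¹`; on `-I` it acts as
`π⁻¹γ₋ = δ(πγ)δ` (because `δπδ = π⁻¹`), and `πγ = (γ⁻¹π⁻¹)⁻¹`. Likewise `π = δπ⁻¹δ`. So both
counts on `S` are twice the counts on `I`, and `χ = 2` becomes `#π|_I + #(γ⁻¹π⁻¹)|_I = |I| + 1`.
-/

open Equiv Equiv.Perm MulAction Pointwise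

section Stabilizer

variable {G α : Type*} [Group G] [MulAction G α] {X Y : Set α}

lemma mem_stabilizer_of_mem_fixingSubgroup_compl {g : G} (h : g ∈ fixingSubgroup G Xᶜ) :
    g ∈ stabilizer G X :=
  stabilizer_compl G α ▸ fixingSubgroup_le_stabilizer G _ h

variable {σ τ : Perm α}

lemma Equiv.Perm.SameCycle.mem_iff_of_mem_stabilizer (hσ : σ ∈ stabilizer (Perm α) X)
    {a b : α} (h : σ.SameCycle a b) : a ∈ X ↔ b ∈ X := by
  obtain ⟨m, rfl⟩ := h
  exact (mem_stabilizer_set.1 (zpow_mem hσ m) a).symm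

lemma Equiv.Perm.sameCycle_iff_of_eqOn (hσ : σ ∈ stabilizer (Perm α) X)
    (hτ : τ ∈ stabilizer (Perm α) X) (h : Set.EqOn σ τ X) {a b : α} (ha : a ∈ X) (hb : b ∈ X) :
    σ.SameCycle a b ↔ τ.SameCycle a b := by
  have : σ.subtypePerm (mem_stabilizer_set.1 hσ) = τ.subtypePerm (mem_stabilizer_set.1 hτ) :=
    Equiv.ext fun x => Subtype.ext (h x.2)
  rw [← sameCycle_subtypePerm (h := mem_stabilizer_set.1 hσ) (x := ⟨a, ha⟩) (y := ⟨b, hb⟩), this,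
    sameCycle_subtypePerm]

lemma mem_stabilizer_of_mem_stabilizer_union (hσ : σ ∈ stabilizer (Perm α) (X ∪ Y))
    (hcross : ∀ a ∈ X, ∀ b ∈ Y, ¬ σ.SameCycle a b) : σ ∈ stabilizer (Perm α) X := by
  refine mem_stabilizer_set.2 fun x => ⟨fun hσx => ?_, fun hx => ?_⟩
  · rcases (mem_stabilizer_set.1 hσ x).1 (.inl hσx) with hx | hx
    · exact hx
    · exact (hcross _ hσx x hx (SameCycle.refl σ x).apply_left).elim
  · rcases (mem_stabilizer_set.1 hσ x).2 (.inl hx) with hσx | hσx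
    · exact hσx
    · exact (hcross x hx _ hσx (SameCycle.refl σ x).apply_right).elim

lemma Equiv.Perm.apply_eq_of_mem_closure {β : Type*} {f : α → β} {K : Set (Perm α)}
    (hK : ∀ σ ∈ K, ∀ z, f (σ z) = f z) {ρ : Perm α} (hρ : ρ ∈ Subgroup.closure K) (z : α) :
    f (ρ z) = f z := by
  induction hρ using Subgroup.closure_induction generalizing z with
  | mem σ hσ => exact hK σ hσ z
  | one => rfl
  | mul ρ₁ ρ₂ _ _ ih₁ ih₂ => exact (ih₁ _).trans (ih₂ z)
  | inv ρ _ ih => simpa using (ih (ρ⁻¹ z)).symm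

end Stabilizer

section Quotients

variable {A B : Type*}

def Quot.sumLiftRelEquiv (r : A → A → Prop) (s : B → B → Prop) :
    Quot (Sum.LiftRel r s) ≃ Quot r ⊕ Quot s where
  toFun := Quot.lift (Sum.map (Quot.mk r) (Quot.mk s)) fun
    | _, _, .inl h => congrArg Sum.inl (Quot.sound h)
    | _, _, .inr h => congrArg Sum.inr (Quot.sound h)
  invFun := Sum.elim (Quot.map Sum.inl fun _ _ => .inl) (Quot.map Sum.inr fun _ _ => .inr)
  left_inv q := by induction q using Quot.ind with | _ a => rcases a with a | a <;> rfl
  right_inv := by rintro (q | q) <;> induction q using Quot.ind <;> rfl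

theorem card_quot_add_card_quot_le_of_eqvGen [Finite A] (r s : A → A → Prop)
    (h : ∀ x y, Relation.EqvGen (r ⊔ s) x y) :
    Nat.card (Quot r) + Nat.card (Quot s) ≤ Nat.card A + 1 := by
  rcases isEmpty_or_nonempty A with hA | ⟨⟨x₀⟩⟩
  · simp
  let G : SimpleGraph (Quot r ⊕ Quot s) :=
    .fromEdgeSet (Set.range fun x => s(.inl (Quot.mk r x), .inr (Quot.mk s x)))
  have hadj (x : A) : G.Adj (.inl (Quot.mk r x)) (.inr (Quot.mk s x)) :=
    ⟨⟨x, rfl⟩, Sum.inl_ne_inr⟩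
  have hreach (x y : A) : G.Reachable (.inl (Quot.mk r x)) (.inl (Quot.mk r y)) := by
    induction h x y with
    | rel x y hxy =>
      rcases hxy with hxy | hxy
      · rw [Quot.sound hxy]
      · exact (hadj x).reachable.trans (Quot.sound hxy ▸ (hadj y).reachable.symm)
    | refl => rfl
    | symm _ _ _ ih => exact ih.symm
    | trans _ _ _ _ _ ih₁ ih₂ => exact ih₁.trans ih₂
  have hconn : G.Connected := by
    have : Nonempty (Quot r ⊕ Quot s) := ⟨.inl (Quot.mk r x₀)⟩
    refine .mk fun v w => ?_
    suffices ∀ v, G.Reachable v (.inl (Quot.mk r x₀)) from (this v).trans (this w).symm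
    rintro (q | q) <;> induction q using Quot.ind with | _ x
    · exact hreach x x₀
    · exact (hadj x).reachable.symm.trans (hreach x x₀)
  calc Nat.card (Quot r) + Nat.card (Quot s) = Nat.card (Quot r ⊕ Quot s) := Nat.card_sum.symm
    _ ≤ Nat.card G.edgeSet + 1 := hconn.card_vert_le_card_edgeSet_add_one
    _ ≤ Nat.card A + 1 := by
      gcongr
      rw [SimpleGraph.edgeSet_fromEdgeSet]
      exact (Nat.card_mono (Set.toFinite _) Set.sdiff_subset).trans (Finite.card_range_le _)

end Quotients

section OrbitCount

variable {σ τ : Perm ℤ} {X Y : Set ℤ}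

lemma orbitCountOn_congr (h : ∀ a ∈ X, ∀ b ∈ X, σ.SameCycle a b ↔ τ.SameCycle a b) :
    orbitCountOn σ X = orbitCountOn τ X :=
  Nat.card_congr (Quot.congrRight fun a b => h a a.2 b b.2)

lemma orbitCountOn_congr_of_eqOn (hσ : σ ∈ stabilizer (Perm ℤ) X)
    (hτ : τ ∈ stabilizer (Perm ℤ) X) (h : Set.EqOn σ τ X) :
    orbitCountOn σ X = orbitCountOn τ X :=
  orbitCountOn_congr fun _ ha _ hb => sameCycle_iff_of_eqOn hσ hτ h ha hb

lemma orbitCountOn_inv (σ : Perm ℤ) (X : Set ℤ) : orbitCountOn σ⁻¹ X = orbitCountOn σ X :=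
  orbitCountOn_congr fun _ _ _ _ => sameCycle_inv

lemma orbitCountOn_conj (ρ σ : Perm ℤ) (X : Set ℤ) :
    orbitCountOn (ρ * σ * ρ⁻¹) (ρ • X) = orbitCountOn σ X := by
  refine (Nat.card_congr (Quot.congr (Equiv.image ρ X) fun a b => ?_)).symm
  simp [sameCycle_conj]

lemma orbitCountOn_conj_of_mem_stabilizer {ρ : Perm ℤ} (hρ : ρ ∈ stabilizer (Perm ℤ) X) :
    orbitCountOn (ρ * σ * ρ⁻¹) X = orbitCountOn σ X := by
  conv_lhs => rw [← mem_stabilizer_iff.1 hρ]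
  exact orbitCountOn_conj ρ σ X

lemma orbitCountOn_neg (σ : Perm ℤ) (X : Set ℤ) :
    orbitCountOn (Equiv.neg ℤ * σ * Equiv.neg ℤ) (-X) = orbitCountOn σ X := by
  have h := orbitCountOn_conj (Equiv.neg ℤ) σ X
  rwa [show (Equiv.neg ℤ)⁻¹ = Equiv.neg ℤ from rfl,
    show Equiv.neg ℤ • X = -X from Set.image_neg_eq_neg] at h

lemma orbitCountOn_eq_one (hX : X.Nonempty) (h : ∀ a ∈ X, ∀ b ∈ X, σ.SameCycle a b) :
    orbitCountOn σ X = 1 := by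
  rw [orbitCountOn, Nat.card_eq_one_iff_unique]
  refine ⟨⟨fun u v => ?_⟩, ⟨Quot.mk _ ⟨hX.some, hX.some_mem⟩⟩⟩
  induction u using Quot.ind with | _ a
  induction v using Quot.ind with | _ b
  exact Quot.sound (h a a.2 b b.2)

lemma orbitCountOn_union [Finite X] [Finite Y] (hσ : σ ∈ stabilizer (Perm ℤ) X)
    (hXY : Disjoint X Y) : orbitCountOn σ (X ∪ Y) = orbitCountOn σ X + orbitCountOn σ Y := by
  classical
  rw [orbitCountOn, orbitCountOn, orbitCountOn, ← Nat.card_sum]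
  refine Nat.card_congr ((Quot.congr (Equiv.Set.union hXY) ?_).trans (Quot.sumLiftRelEquiv _ _))
  have hcross : ∀ a ∈ X, ∀ b ∈ Y, ¬ σ.SameCycle a b := fun a ha b hb h =>
    hXY.notMem_of_mem_left ((h.mem_iff_of_mem_stabilizer hσ).1 ha) hb
  intro a b
  rcases a.2 with ha | ha <;> rcases b.2 with hb | hb
  · simp [Set.union_apply_left hXY ha, Set.union_apply_left hXY hb]
  · simpa [Set.union_apply_left hXY ha, Set.union_apply_right hXY hb] using hcross _ ha _ hb
  · simpa [Set.union_apply_right hXY ha, Set.union_apply_left hXY hb, sameCycle_comm]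
      using hcross _ hb _ ha
  · simp [Set.union_apply_right hXY ha, Set.union_apply_right hXY hb]

lemma orbitCountOn_add_orbitCountOn_le_card_add_one [Finite X] (hσ : σ ∈ stabilizer (Perm ℤ) X)
    (hτ : τ ∈ stabilizer (Perm ℤ) X)
    (htrans : ∀ x ∈ X, ∀ y ∈ X, ∃ ρ ∈ Subgroup.closure {σ, τ}, ρ x = y) :
    orbitCountOn σ X + orbitCountOn τ X ≤ Nat.card X + 1 := by
  classical
  set r := (fun a b : X => σ.SameCycle a b) ⊔ fun a b : X => τ.SameCycle a b
  refine card_quot_add_card_quot_le_of_eqvGen _ _ fun x y => Quot.eqvGen_exact ?_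
  let f : ℤ → Option (Quot r) := fun z => if h : z ∈ X then some (Quot.mk r ⟨z, h⟩) else none
  have hf : ∀ ρ ∈ ({σ, τ} : Set (Perm ℤ)), ∀ z, f (ρ z) = f z := by
    intro ρ hρ z
    have hρX : ρ ∈ stabilizer (Perm ℤ) X := by rcases hρ with rfl | rfl <;> assumption
    by_cases hz : z ∈ X
    · have hρz : ρ z ∈ X := (mem_stabilizer_set.1 hρX z).2 hz
      have hstep : r ⟨ρ z, hρz⟩ ⟨z, hz⟩ := by
        rcases hρ with rfl | rfl
        exacts [.inl (SameCycle.refl _ _).apply_left, .inr (SameCycle.refl _ _).apply_left]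
      simp only [f, dif_pos hz, dif_pos hρz]
      exact congrArg some (Quot.sound hstep)
    · have hρz : ρ z ∉ X := mt (mem_stabilizer_set.1 hρX z).1 hz
      simp only [f, dif_neg hz, dif_neg hρz]
  obtain ⟨ρ, hρ, hρx⟩ := htrans x x.2 y y.2
  have h := apply_eq_of_mem_closure hf hρ x
  rw [hρx] at h
  simpa [f] using h.symm

end OrbitCount

lemma Equiv.neg_int_mul_self : Equiv.neg ℤ * Equiv.neg ℤ = 1 := Equiv.ext neg_neg

lemma Equiv.neg_int_mul_self_mul (σ : Perm ℤ) : Equiv.neg ℤ * (Equiv.neg ℤ * σ) = σ := by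
  rw [← mul_assoc, neg_int_mul_self, one_mul]

section Premap

variable {I : Finset ℤ} {γ π : Perm ℤ}

lemma pmSet_eq_union (I : Finset ℤ) : pmSet I = (I : Set ℤ) ∪ -(I : Set ℤ) := by
  ext k
  simp [pmSet]

lemma disjoint_coe_neg_of_pos (hI : ∀ k ∈ I, 0 < k) : Disjoint (I : Set ℤ) (-(I : Set ℤ)) :=
  Set.disjoint_left.2 fun k hk hk' => by
    have := hI k hk
    have := hI (-k) (Set.mem_neg.1 hk')
    omega

instance (I : Finset ℤ) : Finite ↥(-(I : Set ℤ)) := I.finite_toSet.neg.to_subtype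

instance (I : Finset ℤ) : Finite (pmSet I) := by
  rw [pmSet_eq_union]
  infer_instance

lemma card_pmSet (hI : Disjoint (I : Set ℤ) (-(I : Set ℤ))) : Nat.card (pmSet I) = 2 * I.card := by
  classical
  rw [pmSet_eq_union, ← Finset.coe_neg, ← Finset.coe_union, Nat.card_eq_card_toFinset,
    Finset.toFinset_coe, Finset.card_union_of_disjoint, Finset.card_neg, two_mul]
  simpa [← Finset.disjoint_coe] using hI

lemma mem_stabilizer_pmSet (hπs : ∀ k : ℤ, k ∉ I → -k ∉ I → π k = k) :
    π ∈ stabilizer (Perm ℤ) (pmSet I) :=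
  mem_stabilizer_of_mem_fixingSubgroup_compl <| (mem_fixingSubgroup_iff _).2 fun k hk =>
    hπs k (fun h => hk (.inl h)) fun h => hk (.inr h)

lemma mem_fixingSubgroup_neg (hI : Disjoint (I : Set ℤ) (-(I : Set ℤ)))
    (hγs : ∀ k : ℤ, k ∉ I → γ k = k) : γ ∈ fixingSubgroup (Perm ℤ) (-(I : Set ℤ)) :=
  (mem_fixingSubgroup_iff _).2 fun k hk => hγs k (hI.notMem_of_mem_right hk)

lemma permMinus_mem_fixingSubgroup (hI : Disjoint (I : Set ℤ) (-(I : Set ℤ)))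
    (hγs : ∀ k : ℤ, k ∉ I → γ k = k) : permMinus γ ∈ fixingSubgroup (Perm ℤ) (I : Set ℤ) :=
  (mem_fixingSubgroup_iff _).2 fun k hk => by
    have : -k ∉ I := hI.notMem_of_mem_left hk ∘ Set.mem_neg.2
    simp [permMinus, Perm.mul_apply, hγs _ this]

lemma mem_stabilizer_inf_neg (hI : Disjoint (I : Set ℤ) (-(I : Set ℤ)))
    (hγs : ∀ k : ℤ, k ∉ I → γ k = k) :
    γ ∈ stabilizer (Perm ℤ) (I : Set ℤ) ⊓ stabilizer (Perm ℤ) (-(I : Set ℤ)) :=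
  ⟨mem_stabilizer_of_mem_fixingSubgroup_compl ((mem_fixingSubgroup_iff _).2 hγs),
    fixingSubgroup_le_stabilizer _ _ (mem_fixingSubgroup_neg hI hγs)⟩

lemma permMinus_mem_stabilizer_inf_neg (hI : Disjoint (I : Set ℤ) (-(I : Set ℤ)))
    (hγs : ∀ k : ℤ, k ∉ I → γ k = k) :
    permMinus γ ∈ stabilizer (Perm ℤ) (I : Set ℤ) ⊓ stabilizer (Perm ℤ) (-(I : Set ℤ)) :=
  ⟨fixingSubgroup_le_stabilizer _ _ (permMinus_mem_fixingSubgroup hI hγs),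
    mem_stabilizer_of_mem_fixingSubgroup_compl <| (mem_fixingSubgroup_iff _).2 fun k hk => by
      simp [permMinus, Perm.mul_apply, hγs (-k) hk]⟩

lemma mul_inv_permMinus_mem_stabilizer_inf_neg (hI : Disjoint (I : Set ℤ) (-(I : Set ℤ)))
    (hγs : ∀ k : ℤ, k ∉ I → γ k = k) :
    γ * (permMinus γ)⁻¹ ∈ stabilizer (Perm ℤ) (I : Set ℤ) ⊓ stabilizer (Perm ℤ) (-(I : Set ℤ)) :=
  mul_mem (mem_stabilizer_inf_neg hI hγs) (inv_mem (permMinus_mem_stabilizer_inf_neg hI hγs))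

lemma mul_inv_permMinus_eqOn (hI : Disjoint (I : Set ℤ) (-(I : Set ℤ)))
    (hγs : ∀ k : ℤ, k ∉ I → γ k = k) : Set.EqOn (γ * (permMinus γ)⁻¹) γ I := fun x hx => by
  have := (mem_fixingSubgroup_iff _).1 (inv_mem (permMinus_mem_fixingSubgroup hI hγs)) x hx
  simp_all [Perm.mul_apply, Perm.smul_def]

lemma mul_inv_permMinus_eqOn_neg (hI : Disjoint (I : Set ℤ) (-(I : Set ℤ)))
    (hγs : ∀ k : ℤ, k ∉ I → γ k = k) :
    Set.EqOn (γ * (permMinus γ)⁻¹) ⇑(permMinus γ)⁻¹ (-(I : Set ℤ)) := fun x hx =>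
  (mem_fixingSubgroup_iff _).1 (mem_fixingSubgroup_neg hI hγs) _
    ((mem_stabilizer_set.1 (inv_mem (permMinus_mem_stabilizer_inf_neg hI hγs).2) x).2 hx)

lemma sameCycle_mul_inv_permMinus (hI : Disjoint (I : Set ℤ) (-(I : Set ℤ)))
    (hγs : ∀ k : ℤ, k ∉ I → γ k = k) (hγc : ∀ a ∈ I, ∀ b ∈ I, γ.SameCycle a b) {x y : ℤ}
    (hx : x ∈ I) (hy : y ∈ I) : (γ * (permMinus γ)⁻¹).SameCycle x y :=
  (sameCycle_iff_of_eqOn (mul_inv_permMinus_mem_stabilizer_inf_neg hI hγs).1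
    (mem_stabilizer_inf_neg hI hγs).1 (mul_inv_permMinus_eqOn hI hγs) hx hy).2 (hγc x hx y hy)

lemma sameCycle_mul_inv_permMinus_of_neg (hI : Disjoint (I : Set ℤ) (-(I : Set ℤ)))
    (hγs : ∀ k : ℤ, k ∉ I → γ k = k) (hγc : ∀ a ∈ I, ∀ b ∈ I, γ.SameCycle a b) {x y : ℤ}
    (hx : x ∈ -(I : Set ℤ)) (hy : y ∈ -(I : Set ℤ)) : (γ * (permMinus γ)⁻¹).SameCycle x y :=
  (sameCycle_iff_of_eqOn (mul_inv_permMinus_mem_stabilizer_inf_neg hI hγs).2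
    (inv_mem (permMinus_mem_stabilizer_inf_neg hI hγs).2) (mul_inv_permMinus_eqOn_neg hI hγs)
    hx hy).2 (sameCycle_inv.2 (sameCycle_conj (g := Equiv.neg ℤ).2 (hγc _ hx _ hy)))

lemma orbitCountOn_mul_inv_permMinus (hI : Disjoint (I : Set ℤ) (-(I : Set ℤ)))
    (hne : I.Nonempty) (hγs : ∀ k : ℤ, k ∉ I → γ k = k)
    (hγc : ∀ a ∈ I, ∀ b ∈ I, γ.SameCycle a b) :
    orbitCountOn (γ * (permMinus γ)⁻¹) (pmSet I) = 2 := by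
  rw [pmSet_eq_union, orbitCountOn_union (mul_inv_permMinus_mem_stabilizer_inf_neg hI hγs).1 hI,
    orbitCountOn_eq_one (Finset.coe_nonempty.2 hne) fun _ hx _ hy =>
      sameCycle_mul_inv_permMinus hI hγs hγc hx hy,
    orbitCountOn_eq_one (Finset.coe_nonempty.2 hne).neg fun _ hx _ hy =>
      sameCycle_mul_inv_permMinus_of_neg hI hγs hγc hx hy]

lemma chi_eq (hI : Disjoint (I : Set ℤ) (-(I : Set ℤ))) (hne : I.Nonempty)
    (hγs : ∀ k : ℤ, k ∉ I → γ k = k) (hγc : ∀ a ∈ I, ∀ b ∈ I, γ.SameCycle a b) :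
    chi I γ π = 1 + ((orbitCountOn π (pmSet I) +
      orbitCountOn (γ⁻¹ * π⁻¹ * permMinus γ) (pmSet I) : ℕ) : ℚ) / 2 - I.card := by
  rw [chi, orbitCountOn_mul_inv_permMinus hI hne hγs hγc]
  push_cast
  ring

lemma orbitCountOn_add_le_of_connected (hI : Disjoint (I : Set ℤ) (-(I : Set ℤ)))
    (hγs : ∀ k : ℤ, k ∉ I → γ k = k) (hγc : ∀ a ∈ I, ∀ b ∈ I, γ.SameCycle a b)
    (hπs : ∀ k : ℤ, k ∉ I → -k ∉ I → π k = k) (hconn : ∃ a ∈ I, ∃ b ∈ I, π.SameCycle a (-b)) :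
    orbitCountOn π (pmSet I) + orbitCountOn (γ⁻¹ * π⁻¹ * permMinus γ) (pmSet I) ≤
      2 * I.card + 1 := by
  obtain ⟨a, ha, b, hb, hab⟩ := hconn
  set g := γ * (permMinus γ)⁻¹ with hg_def
  have hγS : γ ∈ stabilizer (Perm ℤ) (pmSet I) := pmSet_eq_union I ▸
    stabilizer_inf_stabilizer_le_stabilizer_union (mem_stabilizer_inf_neg hI hγs)
  have hgS : g ∈ stabilizer (Perm ℤ) (pmSet I) := pmSet_eq_union I ▸
    stabilizer_inf_stabilizer_le_stabilizer_union (mul_inv_permMinus_mem_stabilizer_inf_neg hI hγs)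
  have hπS := mem_stabilizer_pmSet hπs
  rw [← orbitCountOn_inv (γ⁻¹ * π⁻¹ * permMinus γ),
    ← orbitCountOn_conj_of_mem_stabilizer (σ := (γ⁻¹ * π⁻¹ * permMinus γ)⁻¹) hγS,
    show γ * (γ⁻¹ * π⁻¹ * permMinus γ)⁻¹ * γ⁻¹ = g * π by rw [hg_def]; group, ← card_pmSet hI]
  refine orbitCountOn_add_orbitCountOn_le_card_add_one hπS (mul_mem hgS hπS) ?_
  have hπ : π ∈ Subgroup.closure {π, g * π} := Subgroup.subset_closure (.inl rfl)
  have hg : g ∈ Subgroup.closure {π, g * π} := by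
    simpa using mul_mem (Subgroup.subset_closure (.inr rfl)) (inv_mem hπ)
  suffices ∀ x ∈ pmSet I, ∃ ρ ∈ Subgroup.closure {π, g * π}, ρ x = a by
    intro x hx y hy
    obtain ⟨ρ, hρ, hρx⟩ := this x hx
    obtain ⟨ρ', hρ', hρy⟩ := this y hy
    exact ⟨ρ'⁻¹ * ρ, mul_mem (inv_mem hρ') hρ, by simp [Perm.mul_apply, hρx, ← hρy]⟩
  rintro x (hx | hx)
  · obtain ⟨m, hm⟩ := sameCycle_mul_inv_permMinus hI hγs hγc hx ha
    exact ⟨g ^ m, zpow_mem hg m, hm⟩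
  · obtain ⟨m, hm⟩ := sameCycle_mul_inv_permMinus_of_neg hI hγs hγc (Set.mem_neg.2 hx)
      (y := -b) (by simpa using hb)
    obtain ⟨k, hk⟩ := hab.symm
    refine ⟨π ^ k * g ^ m, mul_mem (zpow_mem hπ k) (zpow_mem hg m), ?_⟩
    rw [Perm.mul_apply, hg_def, hm, hk]

lemma mem_stabilizer_inf_neg_of_not_connected (hπs : ∀ k : ℤ, k ∉ I → -k ∉ I → π k = k)
    (hnc : ∀ a ∈ I, ∀ b ∈ I, ¬ π.SameCycle a (-b)) :
    π ∈ stabilizer (Perm ℤ) (I : Set ℤ) ⊓ stabilizer (Perm ℤ) (-(I : Set ℤ)) := by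
  have hπS := pmSet_eq_union I ▸ mem_stabilizer_pmSet hπs
  refine ⟨mem_stabilizer_of_mem_stabilizer_union hπS fun a ha b hb h =>
      hnc a ha (-b) hb (by simpa using h),
    mem_stabilizer_of_mem_stabilizer_union (Set.union_comm _ _ ▸ hπS) fun a ha b hb h =>
      hnc b hb (-a) ha (by simpa using h.symm)⟩

lemma orbitCountOn_pmSet_of_not_connected (hI : Disjoint (I : Set ℤ) (-(I : Set ℤ)))
    (hπ : IsPremap π) (hπs : ∀ k : ℤ, k ∉ I → -k ∉ I → π k = k)
    (hnc : ∀ a ∈ I, ∀ b ∈ I, ¬ π.SameCycle a (-b)) :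
    orbitCountOn π (pmSet I) = 2 * orbitCountOn π I := by
  have hπ' : Equiv.neg ℤ * π⁻¹ * Equiv.neg ℤ = π := by
    rw [← hπ.1]
    simp only [mul_assoc, neg_int_mul_self, neg_int_mul_self_mul, mul_one]
  have hneg := orbitCountOn_neg π⁻¹ I
  rw [hπ', orbitCountOn_inv] at hneg
  rw [pmSet_eq_union, orbitCountOn_union (mem_stabilizer_inf_neg_of_not_connected hπs hnc).1 hI,
    hneg, two_mul]

lemma orbitCountOn_inv_mul_inv_mul_permMinus_of_not_connected
    (hI : Disjoint (I : Set ℤ) (-(I : Set ℤ))) (hγs : ∀ k : ℤ, k ∉ I → γ k = k)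
    (hπ : IsPremap π) (hπs : ∀ k : ℤ, k ∉ I → -k ∉ I → π k = k)
    (hnc : ∀ a ∈ I, ∀ b ∈ I, ¬ π.SameCycle a (-b)) :
    orbitCountOn (γ⁻¹ * π⁻¹ * permMinus γ) (pmSet I) = 2 * orbitCountOn (γ⁻¹ * π⁻¹) I := by
  have hγ := mem_stabilizer_inf_neg hI hγs
  have hγm := permMinus_mem_stabilizer_inf_neg hI hγs
  have hπH := mem_stabilizer_inf_neg_of_not_connected hπs hnc
  have hτ := mul_mem (mul_mem (inv_mem hγ) (inv_mem hπH)) hγm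
  rw [pmSet_eq_union, orbitCountOn_union hτ.1 hI, two_mul]
  congr 1
  · refine orbitCountOn_congr_of_eqOn hτ.1 (mul_mem (inv_mem hγ) (inv_mem hπH)).1 fun x hx => ?_
    have := (mem_fixingSubgroup_iff _).1 (permMinus_mem_fixingSubgroup hI hγs) x hx
    simp_all [Perm.mul_apply, Perm.smul_def]
  · have hconj : Equiv.neg ℤ * (π * γ) * Equiv.neg ℤ = π⁻¹ * permMinus γ := by
      rw [← hπ.1, permMinus]
      simp only [mul_assoc, neg_int_mul_self_mul]
    calc orbitCountOn (γ⁻¹ * π⁻¹ * permMinus γ) (-(I : Set ℤ))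
        = orbitCountOn (π⁻¹ * permMinus γ) (-(I : Set ℤ)) := by
          refine orbitCountOn_congr_of_eqOn hτ.2 (mul_mem (inv_mem hπH.2) hγm.2) fun x hx => ?_
          exact (mem_fixingSubgroup_iff _).1 (inv_mem (mem_fixingSubgroup_neg hI hγs)) _
            ((mem_stabilizer_set.1 (mul_mem (inv_mem hπH.2) hγm.2) x).2 hx)
      _ = orbitCountOn (π * γ) I := by rw [← hconj, orbitCountOn_neg]
      _ = orbitCountOn (γ⁻¹ * π⁻¹) I := by rw [← mul_inv_rev, orbitCountOn_inv]

end Premap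

/-- for `γ` a single cycle on a finite set `I` of positive
integers and `π` a premap on `±I`: `χ(γ,π) = 2` iff `π` does not connect `I`
and `−I` and the permutation induced by `π` on `I` is disc-noncrossing relative
to `γ`, the latter characterized (Biane) by `#(σ) + #(γ⁻¹σ⁻¹) = |I| + 1`.
(When `π` does not connect `I` and `−I`, the induced permutation on `I` is the
restriction of `π`, so its cycle counts are orbit counts on `I`.) -/
theorem statement8 (I : Finset ℤ) (hI : ∀ k ∈ I, 0 < k) (hne : I.Nonempty)
    (γ π : Equiv.Perm ℤ)
    (hγs : ∀ k : ℤ, k ∉ I → γ k = k)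
    (hγc : ∀ a ∈ I, ∀ b ∈ I, γ.SameCycle a b)
    (hπ : IsPremap π)
    (hπs : ∀ k : ℤ, k ∉ I → -k ∉ I → π k = k) :
    chi I γ π = 2 ↔
      (∀ a ∈ I, ∀ b ∈ I, ¬ π.SameCycle a (-b)) ∧
        orbitCountOn π (I : Set ℤ) + orbitCountOn (γ⁻¹ * π⁻¹) (I : Set ℤ) =
          I.card + 1 := by
  have hdisj := disjoint_coe_neg_of_pos hI
  rw [chi_eq hdisj hne hγs hγc]
  set B := orbitCountOn π (pmSet I)
  set C := orbitCountOn (γ⁻¹ * π⁻¹ * permMinus γ) (pmSet I)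
  constructor
  · intro h
    have hsum : B + C = 2 * I.card + 2 := by
      exact_mod_cast (by linarith : ((B + C : ℕ) : ℚ) = 2 * I.card + 2)
    have hnc : ∀ a ∈ I, ∀ b ∈ I, ¬ π.SameCycle a (-b) := fun a ha b hb hab => by
      have : B + C ≤ 2 * I.card + 1 :=
        orbitCountOn_add_le_of_connected hdisj hγs hγc hπs ⟨a, ha, b, hb, hab⟩
      omega
    have hB : B = _ := orbitCountOn_pmSet_of_not_connected hdisj hπ hπs hnc
    have hC : C = _ := orbitCountOn_inv_mul_inv_mul_permMinus_of_not_connected hdisj hγs hπ hπs hnc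
    exact ⟨hnc, by omega⟩
  · rintro ⟨hnc, hcount⟩
    have hB : B = _ := orbitCountOn_pmSet_of_not_connected hdisj hπ hπs hnc
    have hC : C = _ := orbitCountOn_inv_mul_inv_mul_permMinus_of_not_connected hdisj hγs hπ hπs hnc
    rw [hB, hC, ← mul_add, hcount]
    push_cast
    ring
end

section
/- Wick's formula: if (f_λ)_{λ∈Λ} is a centred real Gaussian family, then for any λ₁,…,λ_n ∈ Λ, E(f_{λ₁}⋯f_{λ_n}) = Σ_{π ∈ P₂(n)} Π_{{k,l} ∈ π} E(f_{λ_k} f_{λ_l}), where P₂(n) is the set of pairings of {1,…,n}; in particular the expectation is 0 when n is odd. -/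
/-!
Both sides of Wick's formula are symmetric multilinear forms in the random variables, on the
space of real random variables with moments of all orders: for the right-hand side this is because
each variable lies in exactly one block of a pairing. By polarization a symmetric multilinear form
is determined by its values on the diagonal, so it suffices to take all variables equal to one
centred Gaussian `g` of variance `v`. Then the left-hand side is `E[g ^ n]` and the right-hand side
is `#P₂(n) * v ^ (n / 2)`; both satisfy `a (n + 2) = (n + 1) * v * a n`, the first by Gaussian
integration by parts, the second by choosing the partner of one fixed point.
-/

open MeasureTheory ProbabilityTheory Finset
open scoped Classical NNReal ENNReal

/-- `(n - 1)‼` for even `n` and `0` for odd `n`. -/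
def Nat.numPairings : ℕ → ℕ
  | 0 => 1
  | 1 => 0
  | n + 2 => (n + 1) * Nat.numPairings n

lemma Nat.numPairings_eq_mul {n : ℕ} (hn : n ≠ 0) :
    n.numPairings = (n - 1) * (n - 2).numPairings := by
  match n, hn with
  | 1, _ => rfl
  | n + 2, _ => rfl

namespace Finset

variable {ι κ : Type*}

def IsPairing (s : Finset ι) (P : Finset (Finset ι)) : Prop :=
  (∀ B ∈ P, B ⊆ s ∧ #B = 2) ∧ ∀ i ∈ s, ∃! B, B ∈ P ∧ i ∈ B

noncomputable def pairings (s : Finset ι) : Finset (Finset (Finset ι)) :=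
  s.powerset.powerset.filter (IsPairing s)

lemma mem_pairings {s : Finset ι} {P : Finset (Finset ι)} : P ∈ pairings s ↔ IsPairing s P := by
  simp only [pairings, mem_filter, mem_powerset, and_iff_right_iff_imp]
  exact fun hP B hB => mem_powerset.2 (hP.1 B hB).1

namespace IsPairing

variable {s t : Finset ι} {P Q : Finset (Finset ι)}

lemma eq_of_mem (hP : IsPairing s P) {B B' : Finset ι} {i : ι} (hB : B ∈ P) (hB' : B' ∈ P)
    (hi : i ∈ B) (hi' : i ∈ B') : B = B' :=
  (hP.2 i ((hP.1 B hB).1 hi)).unique ⟨hB, hi⟩ ⟨hB', hi'⟩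

lemma two_mul_card (hP : IsPairing s P) : 2 * #P = #s := by
  have hcover : P.biUnion id = s := by
    ext i
    simp only [mem_biUnion, id]
    exact ⟨fun ⟨B, hB, hi⟩ => (hP.1 B hB).1 hi, fun hi => (hP.2 i hi).exists⟩
  rw [← hcover, card_biUnion (t := id) fun B hB B' hB' hne =>
      disjoint_left.2 fun i hi hi' => hne (hP.eq_of_mem hB hB' hi hi'),
    sum_congr rfl fun B hB => show #(id B) = 2 from (hP.1 B hB).2, sum_const, smul_eq_mul,
    mul_comm]

lemma map (hP : IsPairing s P) (e : ι ↪ κ) :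
    IsPairing (s.map e) (P.map (mapEmbedding e).toEmbedding) := by
  refine ⟨?_, ?_⟩
  · simp only [mem_map, RelEmbedding.coe_toEmbedding, mapEmbedding_apply]
    rintro _ ⟨B, hB, rfl⟩
    exact ⟨map_subset_map.2 (hP.1 B hB).1, (card_map e).trans (hP.1 B hB).2⟩
  · simp only [mem_map]
    rintro _ ⟨i, hi, rfl⟩
    obtain ⟨B, ⟨hB, hiB⟩, huniq⟩ := hP.2 i hi
    refine ⟨B.map e, ⟨⟨B, hB, rfl⟩, mem_map_of_mem _ hiB⟩, ?_⟩
    simp only [RelEmbedding.coe_toEmbedding, mapEmbedding_apply]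
    rintro _ ⟨⟨B', hB', rfl⟩, hiB'⟩
    obtain ⟨j, hj, hji⟩ := mem_map.1 hiB'
    rw [e.injective hji] at hj
    rw [huniq B' ⟨hB', hj⟩]

variable [DecidableEq ι] {a b : ι}

lemma exists_pair_mem (hP : IsPairing s P) (ha : a ∈ s) : ∃ b ∈ s.erase a, {a, b} ∈ P := by
  obtain ⟨B, ⟨hB, haB⟩, -⟩ := hP.2 a ha
  obtain ⟨x, y, hxy, rfl⟩ := card_eq_two.1 (hP.1 B hB).2
  have hsub := (hP.1 _ hB).1
  rcases mem_insert.1 haB with rfl | h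
  · exact ⟨y, mem_erase.2 ⟨hxy.symm, hsub (by simp)⟩, hB⟩
  · obtain rfl := mem_singleton.1 h
    exact ⟨x, mem_erase.2 ⟨hxy, hsub (by simp)⟩, pair_comm x a ▸ hB⟩

lemma insert_pair (hQ : IsPairing t Q) (ha : a ∉ t) (hb : b ∉ t) (hab : a ≠ b) :
    IsPairing (insert a (insert b t)) (insert {a, b} Q) := by
  refine ⟨fun B hB => ?_, fun i hi => ?_⟩
  · rcases mem_insert.1 hB with rfl | hB
    · exact ⟨insert_subset_insert a (singleton_subset_iff.2 (mem_insert_self b t)), card_pair hab⟩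
    · exact ⟨(hQ.1 B hB).1.trans ((subset_insert b t).trans (subset_insert a _)), (hQ.1 B hB).2⟩
  by_cases hiab : i ∈ ({a, b} : Finset ι)
  · refine ⟨{a, b}, ⟨mem_insert_self _ _, hiab⟩, fun B ⟨hB, hiB⟩ => ?_⟩
    rcases mem_insert.1 hB with rfl | hB
    · rfl
    · have := (hQ.1 B hB).1 hiB
      grind
  · obtain ⟨B, ⟨hB, hiB⟩, huniq⟩ := hQ.2 i (by grind)
    refine ⟨B, ⟨mem_insert_of_mem hB, hiB⟩, fun B' ⟨hB', hiB'⟩ => ?_⟩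
    rcases mem_insert.1 hB' with rfl | hB'
    · exact absurd hiB' hiab
    · exact huniq B' ⟨hB', hiB'⟩

lemma erase_pair (hP : IsPairing s P) (hab : {a, b} ∈ P) :
    IsPairing ((s.erase a).erase b) (P.erase {a, b}) := by
  refine ⟨fun B hB => ⟨fun i hi => ?_, (hP.1 B (mem_of_mem_erase hB)).2⟩, fun i hi => ?_⟩
  · have hBP := mem_of_mem_erase hB
    have hne := ne_of_mem_erase hB
    have hia : i ≠ a := by
      rintro rfl
      exact hne (hP.eq_of_mem hBP hab hi (mem_insert_self _ _))
    have hib : i ≠ b := by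
      rintro rfl
      exact hne (hP.eq_of_mem hBP hab hi (by simp))
    exact mem_erase.2 ⟨hib, mem_erase.2 ⟨hia, (hP.1 B hBP).1 hi⟩⟩
  · obtain ⟨hib, hia, his⟩ : i ≠ b ∧ i ≠ a ∧ i ∈ s := by simpa using hi
    obtain ⟨B, ⟨hB, hiB⟩, huniq⟩ := hP.2 i his
    have hne : B ≠ {a, b} := by
      rintro rfl
      simp_all
    exact ⟨B, ⟨mem_erase.2 ⟨hne, hB⟩, hiB⟩,
      fun B' ⟨hB', hiB'⟩ => huniq B' ⟨mem_of_mem_erase hB', hiB'⟩⟩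

end IsPairing

lemma pairings_empty : pairings (∅ : Finset ι) = {∅} := by
  ext P
  simp only [mem_pairings, mem_singleton, IsPairing, subset_empty, notMem_empty,
    IsEmpty.forall_iff, implies_true, and_true]
  refine ⟨fun hP => eq_empty_of_forall_notMem fun B hB => ?_, fun hP => by simp [hP]⟩
  have := (hP B hB).2
  rw [(hP B hB).1] at this
  simp at this

variable [DecidableEq ι]

lemma pairings_eq_biUnion {s : Finset ι} {a : ι} (ha : a ∈ s) :
    pairings s = (s.erase a).biUnion fun b =>
      (pairings ((s.erase a).erase b)).image (insert {a, b}) := by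
  ext P
  simp only [mem_biUnion, mem_image, mem_pairings]
  constructor
  · intro hP
    obtain ⟨b, hb, hab⟩ := hP.exists_pair_mem ha
    exact ⟨b, hb, P.erase {a, b}, hP.erase_pair hab, insert_erase hab⟩
  · rintro ⟨b, hb, Q, hQ, rfl⟩
    obtain ⟨hba, hbs⟩ := mem_erase.1 hb
    have hs : insert a (insert b ((s.erase a).erase b)) = s := by
      rw [insert_erase (mem_erase.2 ⟨hba, hbs⟩), insert_erase ha]
    exact hs ▸ hQ.insert_pair (by simp) (by simp) hba.symm

lemma card_pairings_eq_sum {s : Finset ι} {a : ι} (ha : a ∈ s) :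
    #(pairings s) = ∑ b ∈ s.erase a, #(pairings ((s.erase a).erase b)) := by
  rw [pairings_eq_biUnion ha, card_biUnion]
  · refine sum_congr rfl fun b _ => card_image_of_injOn fun Q hQ Q' hQ' hQQ' => ?_
    have hnot : ∀ Q ∈ pairings ((s.erase a).erase b), {a, b} ∉ Q := fun Q hQ hab => by
      simpa using ((mem_pairings.1 hQ).1 _ hab).1 (mem_insert_self a {b})
    rw [← erase_insert (hnot Q hQ), ← erase_insert (hnot Q' hQ')]
    exact congrArg (·.erase {a, b}) hQQ'
  · intro b hb b' hb' hne
    refine disjoint_left.2 fun P hPb hPb' => hne ?_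
    have hP : IsPairing s P := mem_pairings.1 <| pairings_eq_biUnion ha ▸
      mem_biUnion.2 ⟨b, hb, hPb⟩
    obtain ⟨Q, -, rfl⟩ := mem_image.1 hPb
    obtain ⟨Q', -, hQ'⟩ := mem_image.1 hPb'
    have hab' : {a, b'} ∈ insert {a, b} Q := hQ' ▸ mem_insert_self _ _
    have hpair := hP.eq_of_mem (mem_insert_self _ _) hab' (mem_insert_self a {b})
      (mem_insert_self a {b'})
    have hb'ab : b' ∈ ({a, b} : Finset ι) := hpair ▸ by simp
    rcases mem_insert.1 hb'ab with h | h
    · exact absurd h (mem_erase.1 hb').1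
    · exact (mem_singleton.1 h).symm

theorem card_pairings (s : Finset ι) : #(pairings s) = Nat.numPairings #s := by
  induction s using Finset.strongInduction with
  | H s ih =>
  rcases s.eq_empty_or_nonempty with rfl | ⟨a, ha⟩
  · simp [pairings_empty, Nat.numPairings]
  have hsub : ∀ b ∈ s.erase a, (s.erase a).erase b ⊂ s := fun b _ =>
    (erase_subset _ _).trans_ssubset (erase_ssubset ha)
  rw [card_pairings_eq_sum ha, sum_congr rfl fun b hb => (ih _ (hsub b hb)).trans <| by
    rw [card_erase_of_mem hb, card_erase_of_mem ha, Nat.sub_sub], sum_const,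
    card_erase_of_mem ha, smul_eq_mul, ← Nat.numPairings_eq_mul (card_ne_zero_of_mem ha)]

lemma map_pairings [DecidableEq κ] (e : ι ↪ κ) (s : Finset ι) :
    (pairings s).map (mapEmbedding (mapEmbedding e).toEmbedding).toEmbedding
      = pairings (s.map e) := by
  refine eq_of_subset_of_card_le (fun P hP => ?_) ?_
  · obtain ⟨Q, hQ, rfl⟩ := mem_map.1 hP
    exact mem_pairings.2 ((mem_pairings.1 hQ).map e)
  · rw [card_map, card_pairings, card_pairings, card_map]

lemma sum_neg_one_pow_card_compl_of_subset [Fintype ι] (R : Finset ι) :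
    ∑ S with R ⊆ S, (-1 : ℤ) ^ #Sᶜ = if R = univ then 1 else 0 := by
  have h : ∑ S with R ⊆ S, (-1 : ℤ) ^ #Sᶜ = ∑ U ∈ Rᶜ.powerset, (-1 : ℤ) ^ #U := by
    refine sum_nbij' compl compl (fun S hS => ?_) (fun U hU => ?_) (fun S _ => compl_compl S)
      (fun U _ => compl_compl U) (fun S _ => rfl)
    · simpa using hS
    · simpa [subset_compl_comm] using hU
  rw [h, sum_powerset_neg_one_pow_card]
  exact if_congr (compl_eq_empty_iff R) rfl rfl

end Finset

namespace MultilinearMap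

variable {R M N ι : Type*} [Semiring R] [AddCommMonoid M] [Module R M] [AddCommGroup N]
  [Module R N] [Fintype ι] [DecidableEq ι]

theorem polarization (T : MultilinearMap R (fun _ : ι => M) N)
    (hT : ∀ (σ : Equiv.Perm ι) x, T (x ∘ σ) = T x) (x : ι → M) :
    (Fintype.card ι).factorial • T x
      = ∑ S : Finset ι, (-1 : ℤ) ^ #Sᶜ • T (fun _ => ∑ i ∈ S, x i) := by
  have hexpand : ∀ S : Finset ι, T (fun _ => ∑ i ∈ S, x i)
      = ∑ r : ι → ι, if univ.image r ⊆ S then T (x ∘ r) else 0 := fun S => by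
    rw [T.map_sum_finset (fun _ => x) (fun _ => S), ← sum_filter]
    congr 1
    ext r
    simp [Fintype.mem_piFinset, image_subset_iff]
  simp_rw [hexpand, smul_sum]
  rw [sum_comm]
  simp_rw [smul_ite, smul_zero, ← sum_filter, ← sum_smul, sum_neg_one_pow_card_compl_of_subset,
    ite_smul, one_smul, zero_smul, ← sum_filter]
  have hsurj : ∀ r : ι → ι, univ.image r = univ ↔ Function.Surjective r := fun r => by
    simp [eq_univ_iff_forall, Function.Surjective]
  have hperm : ∑ r with univ.image r = univ, T (x ∘ r) = ∑ σ : Equiv.Perm ι, T (x ∘ σ) := by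
    refine (sum_bij (fun (σ : Equiv.Perm ι) _ => ⇑σ) (fun σ _ => ?_)
      (fun σ _ τ _ h => DFunLike.coe_injective h) (fun r hr => ?_) (fun _ _ => rfl)).symm
    · simpa [hsurj] using σ.surjective
    · have hr : Function.Surjective r := (hsurj r).1 (mem_filter.1 hr).2
      exact ⟨Equiv.ofBijective r ⟨Finite.injective_iff_surjective.2 hr, hr⟩, mem_univ _, rfl⟩
  rw [hperm, sum_congr rfl fun σ _ => hT σ x, sum_const, card_univ, Fintype.card_perm]

theorem eq_of_symmetric_of_diagonal_eq [IsAddTorsionFree N]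
    {T₁ T₂ : MultilinearMap R (fun _ : ι => M) N}
    (h₁ : ∀ (σ : Equiv.Perm ι) x, T₁ (x ∘ σ) = T₁ x)
    (h₂ : ∀ (σ : Equiv.Perm ι) x, T₂ (x ∘ σ) = T₂ x)
    (hdiag : ∀ m, T₁ (fun _ => m) = T₂ (fun _ => m)) : T₁ = T₂ := by
  ext x
  refine nsmul_right_injective (Nat.factorial_ne_zero (Fintype.card ι)) ?_
  simp only [T₁.polarization h₁, T₂.polarization h₂, hdiag]

end MultilinearMap

namespace ProbabilityTheory

open Real

lemma hasDerivAt_gaussianPDFReal (μ : ℝ) (v : ℝ≥0) (x : ℝ) :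
    HasDerivAt (gaussianPDFReal μ v) (-((x - μ) / v) * gaussianPDFReal μ v x) x := by
  have h : HasDerivAt (fun y => -(y - μ) ^ 2 / (2 * (v : ℝ))) (-(2 * (x - μ)) / (2 * v)) x := by
    simpa using (((hasDerivAt_id' x).sub_const μ).pow 2).neg.div_const (2 * (v : ℝ))
  rw [gaussianPDFReal_def]
  refine (h.exp.const_mul (√(2 * π * v))⁻¹).congr_deriv ?_
  rcases eq_or_ne (v : ℝ) 0 with hv | hv
  · simp [hv]
  · field_simp

lemma integrable_pow_gaussianReal (μ : ℝ) (v : ℝ≥0) (m : ℕ) :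
    Integrable (fun x => x ^ m) (gaussianReal μ v) :=
  (integrable_norm_iff (by fun_prop)).1 <| by
    simpa [← abs_pow] using (memLp_id_gaussianReal (μ := μ) (v := v) m).integrable_norm_pow'

lemma integrable_pow_mul_gaussianPDFReal (μ : ℝ) (v : ℝ≥0) (m : ℕ) :
    Integrable (fun x => x ^ m * gaussianPDFReal μ v x) := by
  rcases eq_or_ne v 0 with rfl | hv
  · simp
  have h := integrable_pow_gaussianReal μ v m
  rw [gaussianReal_of_var_ne_zero _ hv, integrable_withDensity_iff_integrable_smul'
    (measurable_gaussianPDF μ v) (ae_of_all _ fun _ => gaussianPDF_lt_top)] at h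
  simpa [toReal_gaussianPDF, mul_comm] using h

lemma integral_pow_add_two_gaussianReal (v : ℝ≥0) (m : ℕ) :
    ∫ x, x ^ (m + 2) ∂gaussianReal 0 v = (m + 1) * v * ∫ x, x ^ m ∂gaussianReal 0 v := by
  rcases eq_or_ne v 0 with rfl | hv
  · simp
  have hint := integrable_pow_mul_gaussianPDFReal 0 v
  have hIBP : ∫ x, ((m + 1) * (x ^ m * gaussianPDFReal 0 v x)
      - (v : ℝ)⁻¹ * (x ^ (m + 2) * gaussianPDFReal 0 v x)) = 0 := by
    refine integral_eq_zero_of_hasDerivAt_of_integrable (fun x => ?_)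
      (((hint m).const_mul _).sub ((hint (m + 2)).const_mul _)) (hint (m + 1))
    refine ((hasDerivAt_pow (m + 1) x).mul (hasDerivAt_gaussianPDFReal 0 v x)).congr_deriv ?_
    push_cast
    simp only [sub_zero]
    ring
  rw [integral_sub ((hint m).const_mul _) ((hint (m + 2)).const_mul _), integral_const_mul,
    integral_const_mul, sub_eq_zero] at hIBP
  simp only [integral_gaussianReal_eq_integral_smul hv, smul_eq_mul,
    mul_comm (gaussianPDFReal _ _ _)]
  have hv' : (v : ℝ) ≠ 0 := by exact_mod_cast hv
  field_simp at hIBP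
  linear_combination -hIBP

lemma integral_pow_gaussianReal (v : ℝ≥0) :
    ∀ n : ℕ, ∫ x, x ^ n ∂gaussianReal 0 v = n.numPairings * (v : ℝ) ^ (n / 2)
  | 0 => by simp [Nat.numPairings]
  | 1 => by simp [Nat.numPairings, integral_id_gaussianReal]
  | n + 2 => by
    rw [integral_pow_add_two_gaussianReal, integral_pow_gaussianReal v n, Nat.numPairings,
      Nat.add_div_right n two_pos, pow_succ]
    push_cast
    ring

variable {Ω : Type*} [MeasurableSpace Ω] {μ : Measure Ω} {g : Ω → ℝ}

lemma hasGaussianLaw_of_map_eq_gaussianReal {m : ℝ} {v : ℝ≥0}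
    (h : μ.map g = gaussianReal m v) : HasGaussianLaw g μ :=
  HasLaw.hasGaussianLaw ⟨aemeasurable_of_map_neZero (by rw [h]; infer_instance), h⟩

lemma integral_pow_of_map_eq_gaussianReal {v : ℝ≥0} (h : μ.map g = gaussianReal 0 v) (n : ℕ) :
    ∫ ω, g ω ^ n ∂μ = n.numPairings * (v : ℝ) ^ (n / 2) := by
  rw [← integral_pow_gaussianReal, ← h,
    integral_map (hasGaussianLaw_of_map_eq_gaussianReal h).aemeasurable (by fun_prop)]

end ProbabilityTheory

namespace MeasureTheory

variable {Ω : Type*} [MeasurableSpace Ω] (μ : Measure Ω) {ι : Type*}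

def finiteMoments : Submodule ℝ (Ω → ℝ) where
  carrier := {g | ∀ p : ℝ≥0, MemLp g p μ}
  add_mem' hf hg p := (hf p).add (hg p)
  zero_mem' _ := MemLp.zero
  smul_mem' c _ hg p := (hg p).const_smul c

noncomputable def blockMoment (B : Finset ι) (y : ι → finiteMoments μ) : ℝ :=
  ∫ ω, ∏ j ∈ B, (y j : Ω → ℝ) ω ∂μ

variable {μ}

lemma integrable_prod_finiteMoments [IsFiniteMeasure μ] (s : Finset ι)
    (y : ι → finiteMoments μ) : Integrable (fun ω => ∏ i ∈ s, (y i : Ω → ℝ) ω) μ := by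
  have h := MemLp.prod' (s := s) (p := fun _ => (#s : ℝ≥0∞)) fun i _ => (y i).2 #s
  refine memLp_one_iff_integrable.1 (h.mono_exponent ?_)
  rw [sum_const, nsmul_eq_mul, ENNReal.one_le_inv]
  exact ENNReal.mul_inv_le_one _

lemma blockMoment_comp_perm (σ : Equiv.Perm ι) (B : Finset ι) (y : ι → finiteMoments μ) :
    blockMoment μ B (y ∘ σ) = blockMoment μ (B.map σ.toEmbedding) y := by
  simp [blockMoment, prod_map]

section Update

variable [DecidableEq ι] {B : Finset ι} {k : ι}

lemma blockMoment_update_of_notMem (hk : k ∉ B) (y : ι → finiteMoments μ)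
    (z : finiteMoments μ) : blockMoment μ B (Function.update y k z) = blockMoment μ B y := by
  unfold blockMoment
  congr 1 with ω
  exact prod_congr rfl fun j hj => by rw [Function.update_of_ne (ne_of_mem_of_not_mem hj hk)]

lemma prod_update_eq_mul_prod_erase (hk : k ∈ B) (y : ι → finiteMoments μ)
    (z : finiteMoments μ) :
    (fun ω => ∏ j ∈ B, (Function.update y k z j : Ω → ℝ) ω)
      = fun ω => (z : Ω → ℝ) ω * ∏ j ∈ B.erase k, (y j : Ω → ℝ) ω := by
  ext ω
  rw [← mul_prod_erase B _ hk, Function.update_self]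
  exact congrArg _ (prod_congr rfl fun j hj => by rw [Function.update_of_ne (ne_of_mem_erase hj)])

lemma blockMoment_update_add [IsFiniteMeasure μ] (hk : k ∈ B) (y : ι → finiteMoments μ)
    (u v : finiteMoments μ) :
    blockMoment μ B (Function.update y k (u + v))
      = blockMoment μ B (Function.update y k u) + blockMoment μ B (Function.update y k v) := by
  have hint : ∀ z : finiteMoments μ,
      Integrable (fun ω => (z : Ω → ℝ) ω * ∏ j ∈ B.erase k, (y j : Ω → ℝ) ω) μ := fun z =>
    prod_update_eq_mul_prod_erase hk y z ▸ integrable_prod_finiteMoments B (Function.update y k z)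
  simp only [blockMoment, prod_update_eq_mul_prod_erase hk, Submodule.coe_add, Pi.add_apply,
    add_mul]
  exact integral_add (hint u) (hint v)

lemma blockMoment_update_smul (hk : k ∈ B) (y : ι → finiteMoments μ) (c : ℝ)
    (u : finiteMoments μ) :
    blockMoment μ B (Function.update y k (c • u))
      = c * blockMoment μ B (Function.update y k u) := by
  simp only [blockMoment, prod_update_eq_mul_prod_erase hk, Submodule.coe_smul, Pi.smul_apply,
    smul_eq_mul, mul_assoc, integral_const_mul]

lemma prod_blockMoment_update {P : Finset (Finset ι)} {B₀ : Finset ι} (hB₀ : B₀ ∈ P)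
    (huniq : ∀ B, B ∈ P ∧ k ∈ B → B = B₀) (y : ι → finiteMoments μ) (z : finiteMoments μ) :
    ∏ B ∈ P, blockMoment μ B (Function.update y k z)
      = blockMoment μ B₀ (Function.update y k z) * ∏ B ∈ P.erase B₀, blockMoment μ B y := by
  rw [← mul_prod_erase P _ hB₀]
  exact congrArg _ (prod_congr rfl fun B hB => blockMoment_update_of_notMem
    (fun hk => ne_of_mem_erase hB (huniq B ⟨mem_of_mem_erase hB, hk⟩)) y z)

end Update

variable [Fintype ι] [IsFiniteMeasure μ]

variable (μ ι) in
noncomputable def momentForm : MultilinearMap ℝ (fun _ : ι => finiteMoments μ) ℝ where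
  toFun := blockMoment μ univ
  map_update_add' y k u v := blockMoment_update_add (mem_univ k) y u v
  map_update_smul' y k c u := blockMoment_update_smul (mem_univ k) y c u

variable (μ ι) in
noncomputable def wickForm : MultilinearMap ℝ (fun _ : ι => finiteMoments μ) ℝ where
  toFun y := ∑ P ∈ pairings univ, ∏ B ∈ P, blockMoment μ B y
  map_update_add' y k u v := by
    simp only [← sum_add_distrib]
    refine sum_congr rfl fun P hP => ?_
    obtain ⟨B₀, ⟨hB₀, hkB₀⟩, huniq⟩ := (mem_pairings.1 hP).2 k (mem_univ k)
    simp only [prod_blockMoment_update hB₀ huniq, blockMoment_update_add hkB₀, add_mul]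
  map_update_smul' y k c u := by
    simp only [smul_eq_mul, mul_sum]
    refine sum_congr rfl fun P hP => ?_
    obtain ⟨B₀, ⟨hB₀, hkB₀⟩, huniq⟩ := (mem_pairings.1 hP).2 k (mem_univ k)
    simp only [prod_blockMoment_update hB₀ huniq, blockMoment_update_smul hkB₀, mul_assoc]

lemma momentForm_comp_perm (σ : Equiv.Perm ι) (y : ι → finiteMoments μ) :
    momentForm μ ι (y ∘ σ) = momentForm μ ι y := by
  simp only [momentForm, MultilinearMap.coe_mk, blockMoment_comp_perm, map_univ_equiv]

lemma wickForm_comp_perm (σ : Equiv.Perm ι) (y : ι → finiteMoments μ) :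
    wickForm μ ι (y ∘ σ) = wickForm μ ι y := by
  simp only [wickForm, MultilinearMap.coe_mk, blockMoment_comp_perm]
  calc ∑ P ∈ pairings univ, ∏ B ∈ P, blockMoment μ (B.map σ.toEmbedding) y
      = ∑ P ∈ (pairings univ).map
            (mapEmbedding (mapEmbedding σ.toEmbedding).toEmbedding).toEmbedding,
          ∏ B ∈ P, blockMoment μ B y := by simp [prod_map]
    _ = ∑ P ∈ pairings univ, ∏ B ∈ P, blockMoment μ B y := by
      rw [map_pairings, map_univ_equiv]

lemma momentForm_diagonal (g : finiteMoments μ) :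
    momentForm μ ι (fun _ => g) = ∫ ω, (g : Ω → ℝ) ω ^ Fintype.card ι ∂μ := by
  simp [momentForm, blockMoment]

lemma wickForm_diagonal (g : finiteMoments μ) :
    wickForm μ ι (fun _ => g)
      = (Fintype.card ι).numPairings * (∫ ω, (g : Ω → ℝ) ω ^ 2 ∂μ) ^ (Fintype.card ι / 2) := by
  have hterm : ∀ P ∈ pairings (univ : Finset ι), ∏ B ∈ P, blockMoment μ B (fun _ => g)
      = (∫ ω, (g : Ω → ℝ) ω ^ 2 ∂μ) ^ (Fintype.card ι / 2) := fun P hP => by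
    have hP := mem_pairings.1 hP
    have hcard : #P = Fintype.card ι / 2 := by
      have := hP.two_mul_card
      rw [card_univ] at this
      omega
    rw [← hcard, ← prod_const]
    refine prod_congr rfl fun B hB => ?_
    simp [blockMoment, prod_const, (hP.1 B hB).2]
  simp only [wickForm, MultilinearMap.coe_mk]
  rw [sum_congr rfl hterm, sum_const, card_pairings, card_univ, nsmul_eq_mul]

end MeasureTheory

namespace ProbabilityTheory

theorem integral_prod_eq_sum_pairings {Ω ι : Type*} [MeasurableSpace Ω] {μ : Measure Ω}
    [Fintype ι] [DecidableEq ι] {V : Submodule ℝ (Ω → ℝ)}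
    (hV : ∀ g ∈ V, ∃ v : ℝ≥0, μ.map g = gaussianReal 0 v) (x : ι → Ω → ℝ) (hx : ∀ i, x i ∈ V) :
    ∫ ω, ∏ i, x i ω ∂μ = ∑ P ∈ pairings univ, ∏ B ∈ P, ∫ ω, ∏ j ∈ B, x j ω ∂μ := by
  have hlaw : ∀ g ∈ V, HasGaussianLaw g μ := fun g hg =>
    hasGaussianLaw_of_map_eq_gaussianReal (hV g hg).choose_spec
  have : IsProbabilityMeasure μ := (hlaw 0 V.zero_mem).isProbabilityMeasure
  have hle : V ≤ finiteMoments μ := fun g hg p => (hlaw g hg).memLp ENNReal.coe_ne_top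
  have hforms : (momentForm μ ι).compLinearMap (fun _ => Submodule.inclusion hle)
      = (wickForm μ ι).compLinearMap (fun _ => Submodule.inclusion hle) := by
    refine MultilinearMap.eq_of_symmetric_of_diagonal_eq
      (fun σ y => momentForm_comp_perm σ fun i => Submodule.inclusion hle (y i))
      (fun σ y => wickForm_comp_perm σ fun i => Submodule.inclusion hle (y i)) fun g => ?_
    obtain ⟨v, hv⟩ := hV g g.2
    change momentForm μ ι (fun _ => Submodule.inclusion hle g)
      = wickForm μ ι (fun _ => Submodule.inclusion hle g)
    rw [momentForm_diagonal, wickForm_diagonal, Submodule.coe_inclusion,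
      integral_pow_of_map_eq_gaussianReal hv, integral_pow_of_map_eq_gaussianReal hv 2]
    simp [Nat.numPairings]
  exact congrArg (fun T => T fun i => ⟨x i, hx i⟩) hforms

lemma exists_map_eq_gaussianReal_of_mem_span {Ω Λ : Type*} [MeasurableSpace Ω] {μ : Measure Ω}
    {f : Λ → Ω → ℝ}
    (hgauss : ∀ (n : ℕ) (ls : Fin n → Λ) (t : Fin n → ℝ), ∃ v : ℝ≥0,
      μ.map (fun ω => ∑ i, t i * f (ls i) ω) = gaussianReal 0 v)
    {g : Ω → ℝ} (hg : g ∈ Submodule.span ℝ (Set.range f)) :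
    ∃ v : ℝ≥0, μ.map g = gaussianReal 0 v := by
  obtain ⟨n, t, y, rfl⟩ := Submodule.mem_span_set'.1 hg
  choose ls hls using fun i => (y i).2
  have hsum : ∑ i, t i • (y i : Ω → ℝ) = fun ω => ∑ i, t i * f (ls i) ω := by
    ext ω
    simp [hls]
  exact hsum ▸ hgauss n ls t

end ProbabilityTheory

theorem statement14_general {Ω Λ : Type*} [MeasureSpace Ω]
    (f : Λ → Ω → ℝ)
    (hgauss : ∀ (n : ℕ) (ls : Fin n → Λ) (t : Fin n → ℝ), ∃ v : NNReal,
      Measure.map (fun ω => ∑ i, t i * f (ls i) ω) ℙ = gaussianReal 0 v)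
    (n : ℕ) (ls : Fin n → Λ) :
    ∫ ω, ∏ i, f (ls i) ω =
      ∑ P ∈ Finset.univ.filter (fun P : Finset (Finset (Fin n)) =>
          (∀ B ∈ P, B.card = 2) ∧ ∀ i : Fin n, ∃! B, B ∈ P ∧ i ∈ B),
        ∏ B ∈ P, ∫ ω, ∏ j ∈ B, f (ls j) ω := by
  have hpairings : Finset.univ.filter (fun P : Finset (Finset (Fin n)) =>
      (∀ B ∈ P, B.card = 2) ∧ ∀ i : Fin n, ∃! B, B ∈ P ∧ i ∈ B) = pairings univ := by
    ext P
    simp [mem_pairings, IsPairing]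
  rw [hpairings]
  exact integral_prod_eq_sum_pairings (fun g hg => exists_map_eq_gaussianReal_of_mem_span hgauss hg)
    _ fun i => Submodule.subset_span ⟨ls i, rfl⟩

/-- Wick's formula.  If `(f λ)` is a centred real Gaussian family
(every finite real-linear combination is a centred Gaussian), then
`E(f_{λ₁}⋯f_{λ_n}) = Σ_{π ∈ P₂(n)} Π_{{k,l} ∈ π} E(f_{λ_k} f_{λ_l})`, the sum
over all pairings (partitions into blocks of size two) of `{1,…,n}`; in
particular the sum is empty and the expectation is `0` when `n` is odd. -/
theorem statement14 {Ω Λ : Type*} [MeasureSpace Ω]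
    (hP : IsProbabilityMeasure (ℙ : Measure Ω))
    (f : Λ → Ω → ℝ) (hmeas : ∀ l, Measurable (f l))
    (hgauss : ∀ (n : ℕ) (ls : Fin n → Λ) (t : Fin n → ℝ), ∃ v : NNReal,
      Measure.map (fun ω => ∑ i, t i * f (ls i) ω) ℙ = gaussianReal 0 v)
    (n : ℕ) (ls : Fin n → Λ) :
    ∫ ω, ∏ i, f (ls i) ω =
      ∑ P ∈ Finset.univ.filter (fun P : Finset (Finset (Fin n)) =>
          (∀ B ∈ P, B.card = 2) ∧ ∀ i : Fin n, ∃! B, B ∈ P ∧ i ∈ B),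
        ∏ B ∈ P, ∫ ω, ∏ j ∈ B, f (ls j) ω :=
  statement14_general f hgauss n ls
end
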